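/- Let E ⊆ 𝕋 be an open subset of the circle written as an at most countable union of pairwise disjoint open arcs with lengths (l_k), and let d_X = inf{β > 0 : Σ_k l_k^β < ∞} be its Besicovitch–Taylor index. Then for every α with 0 ≤ α < 1 − d_X there exists C > 0 such that τ(h,E) ≤ C·h^α for all h ∈ (0,1]. -/

import Mathlib

/-!
The set where `χ_E(· + h) ≠ χ_E` is covered by two arcs of length `min h l_k` at the ends of
each component arc, so `τ(h,E) ≤ 2 ∑ min(h, l_k) ≤ 2 h^{1-β} ∑ l_k^β` for every `β ∈ (0,1]`,
because `min(h,l) ≤ h^{1-β} l^β`. Disjointness gives `∑ l_k ≤ 1`, so the set of admissible `β`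
contains `1`, and any `β` in it below `1 - α` yields the bound, since `h^{1-β} ≤ h^α` for `h ≤ 1`.
-/

open MeasureTheory Set

/-- `τ(h,E)`: the measure of the set where the characteristic function of `E`
translated by `h` differs from itself. -/
noncomputable def tau (h : ℝ) (E : Set (AddCircle (1:ℝ))) : ℝ :=
  (volume {x : AddCircle (1:ℝ) |
    E.indicator (fun _ => (1:ℝ)) (x + ((h : ℝ) : AddCircle (1:ℝ)))
      ≠ E.indicator (fun _ => (1:ℝ)) x}).toReal

/-- The open arc of the circle which is the image of the interval `(a, a+l)`. -/
noncomputable def arc (a l : ℝ) : Set (AddCircle (1:ℝ)) :=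
  (fun r : ℝ => (r : AddCircle (1:ℝ))) '' Set.Ioo a (a + l)

open scoped symmDiff

namespace AddCircle

variable {T : ℝ}

lemma dist_coe_le (x y : ℝ) : dist (x : AddCircle T) y ≤ |x - y| := by
  rw [dist_eq_norm, ← coe_sub, ← Real.norm_eq_abs]
  exact QuotientAddGroup.norm_mk_le_norm

variable [Fact (0 < T)]

lemma volume_image_coe_Icc_le (c m : ℝ) :
    volume (((↑) : ℝ → AddCircle T) '' Icc c (c + m)) ≤ ENNReal.ofReal m := by
  have hball : ((↑) : ℝ → AddCircle T) '' Icc c (c + m) ⊆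
      Metric.closedBall ((c + m / 2 : ℝ) : AddCircle T) (m / 2) := by
    rintro _ ⟨x, hx, rfl⟩
    refine (dist_coe_le _ _).trans (abs_le.2 ⟨?_, ?_⟩) <;> linarith [hx.1, hx.2]
  calc _ ≤ volume (Metric.closedBall ((c + m / 2 : ℝ) : AddCircle T) (m / 2)) :=
        measure_mono hball
    _ = ENNReal.ofReal (min T m) := by rw [volume_closedBall, mul_div_cancel₀ _ two_ne_zero]
    _ ≤ ENNReal.ofReal m := ENNReal.ofReal_le_ofReal (min_le_right _ _)

lemma ofReal_le_volume_image_coe_Ioo (a : ℝ) {l : ℝ} (hl : l ≤ T) :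
    ENNReal.ofReal l ≤ volume (((↑) : ℝ → AddCircle T) '' Ioo a (a + l)) := by
  have hIoo : Ioo a (a + l) ⊆ Ioc a (a + T) :=
    Ioo_subset_Ioc_self.trans (Ioc_subset_Ioc_right (by linarith))
  rw [← (AddCircle.measurePreserving_mk T a).measure_preimage
    (QuotientAddGroup.isOpenMap_coe _ isOpen_Ioo).measurableSet.nullMeasurableSet]
  calc ENNReal.ofReal l = volume (Ioo a (a + l)) := by rw [Real.volume_Ioo, add_sub_cancel_left]
    _ = volume.restrict (Ioc a (a + T)) (Ioo a (a + l)) := by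
      rw [Measure.restrict_apply' measurableSet_Ioc, inter_eq_left.2 hIoo]
    _ ≤ _ := measure_mono (subset_preimage_image _ _)

end AddCircle

lemma min_le_rpow_mul_rpow {x y β : ℝ} (hx : 0 ≤ x) (hy : 0 ≤ y) (hβ0 : 0 ≤ β) (hβ1 : β ≤ 1) :
    min x y ≤ x ^ (1 - β) * y ^ β := by
  have hm : 0 ≤ min x y := le_min hx hy
  calc min x y = min x y ^ (1 - β) * min x y ^ β := by
        rw [← Real.rpow_add' hm (by norm_num), sub_add_cancel, Real.rpow_one]
    _ ≤ x ^ (1 - β) * y ^ β := by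
        gcongr
        · exact min_le_left _ _
        · exact min_le_right _ _

lemma tau_eq_toReal_volume_symmDiff (h : ℝ) (E : Set (AddCircle (1:ℝ))) :
    tau h E = (volume (((· + (h : AddCircle (1:ℝ))) ⁻¹' E) ∆ E)).toReal := by
  unfold tau
  congr 2
  ext x
  by_cases h1 : x + (h : AddCircle (1:ℝ)) ∈ E <;> by_cases h2 : x ∈ E <;>
    simp [mem_symmDiff, h1, h2]

lemma ofReal_le_volume_arc (a : ℝ) {l : ℝ} (hl : l ≤ 1) : ENNReal.ofReal l ≤ volume (arc a l) :=
  AddCircle.ofReal_le_volume_image_coe_Ioo a hl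

lemma preimage_add_arc_symmDiff_subset (a l : ℝ) {h : ℝ} (hh : 0 ≤ h) :
    ((· + (h : AddCircle (1:ℝ))) ⁻¹' arc a l) ∆ arc a l ⊆
      (((↑) : ℝ → AddCircle (1:ℝ)) '' Icc (a - h) (a - h + min h l)) ∪
        ((↑) '' Icc (a + l - min h l) (a + l)) := by
  rintro x (⟨⟨z, hz, hzx⟩, hx⟩ | ⟨⟨y, hy, rfl⟩, hyh⟩)
  · have hx' : ((z - h : ℝ) : AddCircle (1:ℝ)) = x := by
      rw [AddCircle.coe_sub, show (z : AddCircle (1:ℝ)) = x + h from hzx, add_sub_cancel_right]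
    have hle : z - h ≤ a :=
      le_of_not_gt fun hlt ↦ hx ⟨z - h, ⟨hlt, by linarith [hz.2]⟩, hx'⟩
    refine Or.inl ⟨z - h, ⟨by linarith [hz.1], ?_⟩, hx'⟩
    rcases min_choice h l with hm | hm <;> rw [hm] <;> linarith [hz.2]
  · have hge : a + l ≤ y + h :=
      le_of_not_gt fun hlt ↦ hyh ⟨y + h, ⟨by linarith [hy.1], hlt⟩, AddCircle.coe_add _ _ _⟩
    refine Or.inr ⟨y, ⟨?_, hy.2.le⟩, rfl⟩
    rcases min_choice h l with hm | hm <;> rw [hm] <;> linarith [hy.1]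

lemma volume_preimage_add_arc_symmDiff_le (a l : ℝ) {h : ℝ} (hh : 0 ≤ h) :
    volume (((· + (h : AddCircle (1:ℝ))) ⁻¹' arc a l) ∆ arc a l) ≤
      2 * ENNReal.ofReal (min h l) := by
  have hright := AddCircle.volume_image_coe_Icc_le (T := 1) (a + l - min h l) (min h l)
  rw [sub_add_cancel] at hright
  calc _ ≤ _ := measure_mono (preimage_add_arc_symmDiff_subset a l hh)
    _ ≤ _ := measure_union_le _ _
    _ ≤ ENNReal.ofReal (min h l) + ENNReal.ofReal (min h l) :=
      add_le_add (AddCircle.volume_image_coe_Icc_le _ _) hright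
    _ = 2 * ENNReal.ofReal (min h l) := (two_mul _).symm

lemma tau_iUnion_arc_le {ι : Type*} [Countable ι] (a l : ι → ℝ) {h β : ℝ} (hh : 0 ≤ h)
    (hl : ∀ k, 0 ≤ l k) (hβ0 : 0 ≤ β) (hβ1 : β ≤ 1) (hsum : Summable fun k ↦ l k ^ β) :
    tau h (⋃ k, arc (a k) (l k)) ≤ 2 * (∑' k, l k ^ β) * h ^ (1 - β) := by
  have hterm : ∀ k, 2 * ENNReal.ofReal (min h (l k)) ≤
      ENNReal.ofReal (2 * h ^ (1 - β) * l k ^ β) := fun k ↦ by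
    rw [mul_assoc, ENNReal.ofReal_mul zero_le_two, ENNReal.ofReal_ofNat]
    gcongr
    exact min_le_rpow_mul_rpow hh (hl k) hβ0 hβ1
  have hvol : volume (((· + (h : AddCircle (1:ℝ))) ⁻¹' ⋃ k, arc (a k) (l k)) ∆
      ⋃ k, arc (a k) (l k)) ≤ ENNReal.ofReal (∑' k, 2 * h ^ (1 - β) * l k ^ β) := by
    rw [ENNReal.ofReal_tsum_of_nonneg (fun k ↦ by have := hl k; positivity) (hsum.mul_left _),
      preimage_iUnion]
    calc _ ≤ volume (⋃ k, ((· + (h : AddCircle (1:ℝ))) ⁻¹' arc (a k) (l k)) ∆ arc (a k) (l k)) :=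
          measure_mono iUnion_symmDiff_iUnion_subset
      _ ≤ ∑' k, volume (((· + (h : AddCircle (1:ℝ))) ⁻¹' arc (a k) (l k)) ∆ arc (a k) (l k)) :=
          measure_iUnion_le _
      _ ≤ _ := ENNReal.tsum_le_tsum fun k ↦
          (volume_preimage_add_arc_symmDiff_le _ _ hh).trans (hterm k)
  rw [tsum_mul_left] at hvol
  rw [tau_eq_toReal_volume_symmDiff, mul_right_comm]
  exact ENNReal.toReal_le_of_le_ofReal
    (by have : 0 ≤ ∑' k, l k ^ β := tsum_nonneg fun k ↦ Real.rpow_nonneg (hl k) β; positivity) hvol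

lemma summable_of_pairwise_disjoint_arc {ι : Type*} [Countable ι] (a l : ι → ℝ)
    (hl : ∀ k, l k ∈ Ioc (0:ℝ) 1)
    (hdisj : Pairwise (Function.onFun Disjoint fun k ↦ arc (a k) (l k))) : Summable l := by
  have htsum : ∑' k, ENNReal.ofReal (l k) ≠ ⊤ := by
    refine ne_top_of_le_ne_top (measure_ne_top volume (⋃ k, arc (a k) (l k))) ?_
    rw [measure_iUnion hdisj fun k ↦ (QuotientAddGroup.isOpenMap_coe _ isOpen_Ioo).measurableSet]
    exact ENNReal.tsum_le_tsum fun k ↦ ofReal_le_volume_arc (a k) (hl k).2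
  exact (ENNReal.summable_toReal htsum).congr fun k ↦ ENNReal.toReal_ofReal (hl k).1.le

/-- If `E ⊆ 𝕋` is an at most countable union of pairwise disjoint open
arcs of lengths `l k` with Besicovitch–Taylor index `d_X = inf{β > 0 : Σ l_k^β < ∞}`, then
for every `0 ≤ α < 1 - d_X` there is `C > 0` with `τ(h,E) ≤ C·h^α` for all `h ∈ (0,1]`. -/
theorem stmt_11 {ι : Type} [Countable ι] (a l : ι → ℝ) (E : Set (AddCircle (1:ℝ)))
    (hE : E = ⋃ k, arc (a k) (l k))
    (hlen : ∀ k, l k ∈ Set.Ioc (0:ℝ) 1)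
    (hdisj : Pairwise (Function.onFun Disjoint (fun k => arc (a k) (l k)))) :
    ∀ α : ℝ, 0 ≤ α →
      α < 1 - sInf {β : ℝ | 0 < β ∧ Summable (fun k => l k ^ β)} →
      ∃ C > 0, ∀ h ∈ Set.Ioc (0:ℝ) 1, tau h E ≤ C * h ^ α := by
  intro α _ hα
  have hone : (1:ℝ) ∈ {β : ℝ | 0 < β ∧ Summable (fun k => l k ^ β)} :=
    ⟨one_pos, by simpa using summable_of_pairwise_disjoint_arc a l hlen hdisj⟩
  obtain ⟨β, ⟨hβ0, hβsum⟩, hβα⟩ := exists_lt_of_csInf_lt ⟨1, hone⟩ (by linarith : _ < 1 - α)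
  have hS : 0 ≤ ∑' k, l k ^ β := tsum_nonneg fun k ↦ Real.rpow_nonneg (hlen k).1.le β
  refine ⟨2 * ∑' k, l k ^ β + 1, by positivity, fun h ⟨hh0, hh1⟩ ↦ ?_⟩
  calc tau h E ≤ 2 * (∑' k, l k ^ β) * h ^ (1 - β) := by
        rw [hE]
        exact tau_iUnion_arc_le a l hh0.le (fun k ↦ (hlen k).1.le) hβ0.le (by linarith) hβsum
    _ ≤ 2 * (∑' k, l k ^ β) * h ^ α := mul_le_mul_of_nonneg_left
        (Real.rpow_le_rpow_of_exponent_ge hh0 hh1 (by linarith)) (by positivity)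
    _ ≤ (2 * ∑' k, l k ^ β + 1) * h ^ α := by gcongr; linarith
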